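/- arXiv:2007.14718 — 2 statements merged into one kernel-verified Lean document; each statement's English description precedes it below -/
import Mathlib

section
/- Let (A,E) be a binary relation on a set A. Then E is well-founded if and only if there exists a family of sets (X_a)_{a∈A} such that for all a,b∈A, if a E b then X_a ⊆ X_b and the cardinality of X_a is strictly less than the cardinality of X_b. -/
universe u

open Cardinal Ordinal

noncomputable def wfRank {A : Type u} {E : A → A → Prop} (hwf : WellFounded E) : A → Cardinal.{u} :=
  hwf.fix (fun b IH => ⨆ a : {a // E a b}, Order.succ (IH a a.2))

theorem wfRank_lt {A : Type u} {E : A → A → Prop} (hwf : WellFounded E) {a b : A}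
    (h : E a b) : wfRank hwf a < wfRank hwf b := by
  have : wfRank hwf b = ⨆ a : {a // E a b}, Order.succ (wfRank hwf a) := by
    rw [wfRank, WellFounded.fix_eq]
  rw [this]
  have hb := Cardinal.bddAbove_range (fun a : {a // E a b} => Order.succ (wfRank hwf a))
  exact lt_of_lt_of_le (Order.lt_succ _) (le_ciSup hb ⟨a, h⟩)

/-- A binary relation `E` on `A` is well-founded iff there is a family of
sets `(X a)_{a ∈ A}` such that `a E b` implies `X a ⊆ X b` and `#(X a) < #(X b)`. -/
theorem wellFounded_iff_exists_strictly_increasing_family {A : Type u} (E : A → A → Prop) :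
    WellFounded E ↔
      ∃ (γ : Type u) (X : A → Set γ),
        ∀ a b : A, E a b → X a ⊆ X b ∧ #(X a) < #(X b) := by
  constructor
  · intro hwf
    set f := wfRank hwf with hf
    set c : Cardinal.{u} := ⨆ a, Order.succ (f a) with hc
    set γ : Type u := c.ord.ToType with hγ
    have I : IsWellOrder γ (· < ·) := isWellOrder_lt
    have hfc : ∀ a, (f a).ord < @type γ (· < ·) I := by
      intro a
      have hb := Cardinal.bddAbove_range (fun a : A => Order.succ (f a))
      have hac : f a < c := lt_of_lt_of_le (Order.lt_succ _) (le_ciSup hb a)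
      have : @type γ (· < ·) I = c.ord := type_toType c.ord
      rw [this]
      exact ord_lt_ord.2 hac
    set g : A → γ := fun x => @enum γ (· < ·) I ⟨(f x).ord, hfc x⟩ with hg
    have hcard : ∀ x : A, #(Set.Iio (g x)) = f x := by
      intro x
      have h1 : #(Set.Iio (g x)) = (@typein γ (· < ·) I (g x)).card := rfl
      rw [h1, hg]
      rw [@typein_enum γ (· < ·) I _ (hfc x), card_ord]
    refine ⟨γ, fun a => Set.Iio (g a), fun a b hab => ?_⟩
    have hlt : f a < f b := wfRank_lt hwf hab
    have hmono : g a < g b := by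
      rw [hg]
      rw [@enum_lt_enum γ (· < ·) I ⟨(f a).ord, hfc a⟩ ⟨(f b).ord, hfc b⟩]
      exact ord_lt_ord.2 hlt
    refine ⟨Set.Iio_subset_Iio hmono.le, ?_⟩
    rw [hcard a, hcard b]
    exact hlt
  · rintro ⟨γ, X, hX⟩
    have : Subrelation E (InvImage (· < ·) (fun a => #(X a))) := fun h => (hX _ _ h).2
    exact Subrelation.wf this (InvImage.wf _ Cardinal.lt_wf)
end

section
/- Let (B,<) be a well-ordered (or merely linearly ordered and well-founded) set satisfying: (i) for every b ∈ B, |{b' : b' < b}| < |B|, and (ii) for every b ∈ B with infinitely many predecessors, there exists b' ≤ b with |{x : x < b'}| = |{x : x < b}| and b' cardinal-like. Then for every b ∈ B and every cardinal λ < |{x : x < b}|, there exists c < b such that λ ≤ |{x : x < c}| < |{x : x < b}|. -/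
universe u

open Cardinal

/- The element of rank `κ.ord` in the well-order has exactly `κ` predecessors, and it lies below
`b` because `κ.ord < |b↓|.ord ≤ rank b`. -/
theorem Cardinal.exists_lt_mk_Iio_eq {α : Type u} [LinearOrder α] [WellFoundedLT α] {b : α}
    {κ : Cardinal.{u}} (hκ : κ < #(Set.Iio b)) : ∃ c < b, #(Set.Iio c) = κ := by
  have hord : κ.ord < Ordinal.typein (α := α) (· < ·) b :=
    (ord_lt_ord.2 hκ).trans_le (ord_card_le _)
  obtain ⟨c, hc⟩ := (Ordinal.typein (α := α) (· < ·)).mem_range_of_rel hord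
  refine ⟨c, (Ordinal.typein_lt_typein _).1 (hc ▸ hord), ?_⟩
  change (Ordinal.typein (α := α) (· < ·) c).card = κ
  rw [hc, card_ord]

theorem exists_pred_card_between_general {B : Type u} [LinearOrder B] [WellFoundedLT B] :
    ∀ (b : B) (lam : Cardinal.{u}), lam < #(Set.Iio b) →
      ∃ c < b, lam ≤ #(Set.Iio c) ∧ #(Set.Iio c) < #(Set.Iio b) := by
  intro b lam hlam
  obtain ⟨c, hcb, hc⟩ := exists_lt_mk_Iio_eq hlam
  exact ⟨c, hcb, hc.ge, hc ▸ hlam⟩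

/-- Let `(B,<)` be a well-founded linear order such that
(i) every `b` satisfies `|b↓| < |B|`, and (ii) every `b` with infinitely many predecessors
admits `b' ≤ b` with `|b'↓| = |b↓|` and `b'` cardinal-like. Then for every `b` and every
cardinal `lam < |b↓|` there is `c < b` with `lam ≤ |c↓| < |b↓|`. -/
theorem exists_pred_card_between {B : Type u} [LinearOrder B] [WellFoundedLT B]
    (h1 : ∀ b : B, #(Set.Iio b) < #B)
    (h2 : ∀ b : B, (Set.Iio b).Infinite →
      ∃ b' ≤ b, #(Set.Iio b') = #(Set.Iio b) ∧
        ∀ c < b', #(Set.Iio c) < #(Set.Iio b')) :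
    ∀ (b : B) (lam : Cardinal.{u}), lam < #(Set.Iio b) →
      ∃ c < b, lam ≤ #(Set.Iio c) ∧ #(Set.Iio c) < #(Set.Iio b) :=
  exists_pred_card_between_general
end
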